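/- Let α > 0. The function h(Y) = Y/(2α²Y² − 2) − arctanh(αY)/(2α) is well-defined and strictly monotone on the open interval (−1/α, 1/α), and h(Y) → −∞ as Y → (1/α)⁻ and h(Y) → +∞ as Y → (−1/α)⁺. -/

import Mathlib

/-!
Substituting `t = α Y` gives `h Y = -g (α Y) / (2 α)` with `g t = t / (1 - t²) + arctanh t`
On `(-1, 1)` both summands of `g` are strictly increasing and tend to `+∞` as `t → 1⁻`; since
`g` is odd, it tends to `-∞` as `t → -1⁺`.
-/

open Set Filter

/-- Real inverse hyperbolic tangent on `(-1,1)`. -/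
noncomputable def arctanh (y : ℝ) : ℝ := Real.log ((1 + y) / (1 - y)) / 2

open Topology

lemma arctanh_neg (y : ℝ) : arctanh (-y) = -arctanh y := by
  rw [arctanh, arctanh, ← neg_div, ← Real.log_inv, inv_div, sub_neg_eq_add, ← sub_eq_add_neg]

lemma strictMonoOn_arctanh : StrictMonoOn arctanh (Ioo (-1) 1) := by
  intro x hx y hy hxy
  have hpos : 0 < (1 + x) / (1 - x) := div_pos (by linarith [hx.1]) (by linarith [hx.2])
  exact div_lt_div_of_pos_right
    (Real.log_lt_log hpos (Real.strictMonoOn_one_add_div_one_sub hx hy hxy)) two_pos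

lemma tendsto_inv_one_sub_nhdsLT_one : Tendsto (fun y : ℝ => (1 - y)⁻¹) (𝓝[<] 1) atTop := by
  refine tendsto_inv_nhdsGT_zero.comp
    (tendsto_nhdsWithin_of_tendsto_nhds_of_eventually_within _ ?_ ?_)
  · exact ((continuous_sub_left 1).tendsto' 1 0 (sub_self 1)).mono_left nhdsWithin_le_nhds
  · filter_upwards [self_mem_nhdsWithin] with y hy
    exact sub_pos.mpr (mem_Iio.mp hy)

lemma tendsto_arctanh_nhdsLT_one : Tendsto arctanh (𝓝[<] 1) atTop := by
  have hnum : Tendsto (fun y : ℝ => 1 + y) (𝓝[<] 1) (𝓝 2) :=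
    ((continuous_const_add 1).tendsto' 1 2 one_add_one_eq_two).mono_left nhdsWithin_le_nhds
  have hquot := hnum.pos_mul_atTop two_pos tendsto_inv_one_sub_nhdsLT_one
  exact (Real.tendsto_log_atTop.comp hquot).atTop_div_const two_pos

lemma strictMonoOn_div_one_sub_sq : StrictMonoOn (fun t : ℝ => t / (1 - t ^ 2)) (Ioo (-1) 1) := by
  rintro s ⟨hs₁, hs₂⟩ t ⟨ht₁, ht₂⟩ hst
  have hs : 0 < 1 - s ^ 2 := by nlinarith
  have ht : 0 < 1 - t ^ 2 := by nlinarith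
  -- `t (1 - s²) - s (1 - t²) = (t - s)(1 + s t)`
  rw [div_lt_div_iff₀ hs ht]
  nlinarith [mul_pos (sub_pos.mpr hst) (by nlinarith : 0 < 1 + s * t)]

lemma tendsto_div_one_sub_sq_nhdsLT_one :
    Tendsto (fun t : ℝ => t / (1 - t ^ 2)) (𝓝[<] 1) atTop := by
  have hcont : ContinuousAt (fun t : ℝ => t / (1 + t)) 1 := by fun_prop (disch := norm_num)
  have hfac : Tendsto (fun t : ℝ => t / (1 + t)) (𝓝[<] 1) (𝓝 (1 / 2)) := by
    simpa [one_add_one_eq_two] using hcont.tendsto.mono_left nhdsWithin_le_nhds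
  refine (hfac.pos_mul_atTop one_half_pos tendsto_inv_one_sub_nhdsLT_one).congr fun t => ?_
  rw [← div_eq_mul_inv, div_div, ← sq_sub_sq, one_pow]

noncomputable def hProfile (t : ℝ) : ℝ := t / (1 - t ^ 2) + arctanh t

lemma hProfile_neg (t : ℝ) : hProfile (-t) = -hProfile t := by
  rw [hProfile, hProfile, arctanh_neg, neg_sq, neg_div, neg_add]

lemma strictMonoOn_hProfile : StrictMonoOn hProfile (Ioo (-1) 1) :=
  strictMonoOn_div_one_sub_sq.add strictMonoOn_arctanh

lemma tendsto_hProfile_nhdsLT_one : Tendsto hProfile (𝓝[<] 1) atTop :=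
  tendsto_div_one_sub_sq_nhdsLT_one.atTop_add_atTop tendsto_arctanh_nhdsLT_one

lemma tendsto_hProfile_nhdsGT_neg_one : Tendsto hProfile (𝓝[>] (-1)) atBot := by
  have := tendsto_neg_atTop_atBot.comp (tendsto_hProfile_nhdsLT_one.comp tendsto_neg_nhdsGT_neg)
  refine this.congr fun t => ?_
  simp [hProfile_neg]

lemma tendsto_const_mul_nhdsLT {c : ℝ} (hc : 0 < c) (a : ℝ) :
    Tendsto (c * ·) (𝓝[<] a) (𝓝[<] (c * a)) :=
  tendsto_nhdsWithin_of_tendsto_nhds_of_eventually_within _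
    ((continuous_const_mul c).tendsto a |>.mono_left nhdsWithin_le_nhds)
    (eventually_nhdsWithin_of_forall fun _ hx => mul_lt_mul_of_pos_left hx hc)

lemma tendsto_const_mul_nhdsGT {c : ℝ} (hc : 0 < c) (a : ℝ) :
    Tendsto (c * ·) (𝓝[>] a) (𝓝[>] (c * a)) :=
  tendsto_nhdsWithin_of_tendsto_nhds_of_eventually_within _
    ((continuous_const_mul c).tendsto a |>.mono_left nhdsWithin_le_nhds)
    (eventually_nhdsWithin_of_forall fun _ hx => mul_lt_mul_of_pos_left hx hc)

lemma mul_mem_Ioo_neg_one_one {c y : ℝ} (hc : 0 < c) (hy : y ∈ Ioo (-(1 / c)) (1 / c)) :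
    c * y ∈ Ioo (-1) 1 := by
  have h₁ := mul_lt_mul_of_pos_left hy.1 hc
  have h₂ := mul_lt_mul_of_pos_left hy.2 hc
  rw [mul_neg, mul_one_div_cancel hc.ne'] at h₁
  rw [mul_one_div_cancel hc.ne'] at h₂
  exact ⟨h₁, h₂⟩

lemma div_sub_arctanh_eq_neg_hProfile {α : ℝ} (hα : α ≠ 0) (Y : ℝ) :
    Y / (2*α^2*Y^2 - 2) - arctanh (α*Y) / (2*α) = -hProfile (α * Y) / (2 * α) := by
  have hfrac : Y / (2*α^2*Y^2 - 2) = -(α * Y / (1 - (α * Y) ^ 2)) / (2 * α) := by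
    rw [← mul_div_mul_left Y _ hα, neg_div, div_div, ← div_neg]
    congr 1
    ring
  rw [hfrac, hProfile]
  ring

/-- For `α > 0`, `h(Y) = Y/(2α²Y² − 2) − arctanh(αY)/(2α)` is well defined
(the denominator does not vanish) and strictly monotone (decreasing) on `(−1/α, 1/α)`,
with `h(Y) → −∞` as `Y → (1/α)⁻` and `h(Y) → +∞` as `Y → (−1/α)⁺`. -/
theorem stmt9 (α : ℝ) (hα : 0 < α)
    (h : ℝ → ℝ)
    (hh : ∀ Y, h Y = Y / (2*α^2*Y^2 - 2) - arctanh (α*Y) / (2*α)) :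
    (∀ Y ∈ Ioo (-(1/α)) (1/α), 2*α^2*Y^2 - 2 ≠ 0) ∧
    StrictAntiOn h (Ioo (-(1/α)) (1/α)) ∧
    Tendsto h (nhdsWithin (1/α) (Iio (1/α))) atBot ∧
    Tendsto h (nhdsWithin (-(1/α)) (Ioi (-(1/α)))) atTop := by
  have hform : h = fun Y => -hProfile (α * Y) / (2 * α) :=
    funext fun Y => (hh Y).trans (div_sub_arctanh_eq_neg_hProfile hα.ne' Y)
  have h2α : 0 < 2 * α := by positivity
  refine ⟨fun Y hY => ?_, fun x hx y hy hxy => ?_, ?_, ?_⟩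
  · obtain ⟨h₁, h₂⟩ := mul_mem_Ioo_neg_one_one hα hY
    exact (by nlinarith : 2*α^2*Y^2 - 2 < 0).ne
  · have hlt := strictMonoOn_hProfile (mul_mem_Ioo_neg_one_one hα hx)
      (mul_mem_Ioo_neg_one_one hα hy) (mul_lt_mul_of_pos_left hxy hα)
    rw [hform]
    exact div_lt_div_of_pos_right (neg_lt_neg hlt) h2α
  · have hscale := tendsto_const_mul_nhdsLT hα (1 / α)
    rw [mul_one_div_cancel hα.ne'] at hscale
    rw [hform]
    exact (tendsto_neg_atTop_atBot.comp
      (tendsto_hProfile_nhdsLT_one.comp hscale)).atBot_div_const h2α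
  · have hscale := tendsto_const_mul_nhdsGT hα (-(1 / α))
    rw [mul_neg, mul_one_div_cancel hα.ne'] at hscale
    rw [hform]
    exact (tendsto_neg_atBot_atTop.comp
      (tendsto_hProfile_nhdsGT_neg_one.comp hscale)).atTop_div_const h2α
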